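/- At v = 0 one has θ'(0, τ) = 2π q^{1/8} ∏_{j=1}^∞ (1-q^j)^3, i.e. the v-derivative of θ at 0 equals 2π q^{1/8} η-type product. -/

import Mathlib

open Complex

/-- `q = e^{2πiτ}`. -/
noncomputable def qnome (τ : ℂ) : ℂ := Complex.exp (2 * (Real.pi : ℂ) * Complex.I * τ)

/-- `θ(v,τ) = 2 q^{1/8} sin(πv) ∏_{j≥1} (1-q^j)(1-e^{2πiv}q^j)(1-e^{-2πiv}q^j)`. -/
noncomputable def jacobiTheta0 (v τ : ℂ) : ℂ :=
  2 * Complex.exp ((Real.pi : ℂ) * Complex.I * τ / 4) * Complex.sin ((Real.pi : ℂ) * v) *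
    ∏' j : ℕ, ((1 - qnome τ ^ (j + 1)) *
      (1 - Complex.exp (2 * (Real.pi : ℂ) * Complex.I * v) * qnome τ ^ (j + 1)) *
      (1 - Complex.exp (-(2 * (Real.pi : ℂ) * Complex.I * v)) * qnome τ ^ (j + 1)))


/-!
Write `θ(v) = 2 q^{1/8} sin(πv) F(v)` with `F` the infinite product. Since `sin(π·0) = 0`, the
derivative at `0` is `2 q^{1/8} π F(0)` as soon as `F` is merely continuous at `0`, and
`F(0) = ∏ (1 - q^j)³`. Continuity of `F` follows by splitting it into three products
`∏ (1 - g(v) q^j)` with `g` continuous; each converges locally uniformly, because on a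
neighbourhood of any point `|g(v) q^j|` is dominated by a geometric series.
-/

open Filter Topology

theorem HasDerivAt.mul_continuousAt_of_eq_zero {𝕜 : Type*} [NontriviallyNormedField 𝕜]
    {f g : 𝕜 → 𝕜} {f' x : 𝕜} (hf : HasDerivAt f f' x) (hfx : f x = 0)
    (hg : ContinuousAt g x) : HasDerivAt (fun y => f y * g y) (f' * g x) x := by
  rw [hasDerivAt_iff_tendsto_slope] at hf ⊢
  refine (hf.mul (hg.tendsto.mono_left nhdsWithin_le_nhds)).congr fun y => ?_
  simp only [slope_def_field, hfx, zero_mul, sub_zero]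
  ring

theorem Continuous.tprod_mul {α ι R : Type*} [TopologicalSpace α] [CommMonoid R]
    [TopologicalSpace R] [ContinuousMul R] [T2Space R] {f g : α → ι → R}
    (hfm : ∀ x, Multipliable (f x)) (hgm : ∀ x, Multipliable (g x))
    (hf : Continuous fun x => ∏' i, f x i) (hg : Continuous fun x => ∏' i, g x i) :
    Continuous fun x => ∏' i, f x i * g x i :=
  (hf.mul hg).congr fun x => ((hfm x).tprod_mul (hgm x)).symm

theorem summable_mul_pow_succ {R : Type*} [NormedRing R] [HasSummableGeomSeries R] (c : R)
    {q : R} (hq : ‖q‖ < 1) : Summable fun n : ℕ => c * q ^ (n + 1) :=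
  ((summable_nat_add_iff (f := fun n => q ^ n) 1).2
    (summable_geometric_of_norm_lt_one hq)).mul_left c

theorem multipliable_one_sub_mul_pow_succ (c : ℂ) {q : ℂ} (hq : ‖q‖ < 1) :
    Multipliable fun n : ℕ => 1 - c * q ^ (n + 1) := by
  simpa only [← sub_eq_add_neg] using
    Complex.multipliable_one_add_of_summable (summable_mul_pow_succ c hq).neg

theorem continuous_tprod_one_sub_mul_pow_succ {α : Type*} [TopologicalSpace α]
    [LocallyCompactSpace α] {g : α → ℂ} (hg : Continuous g) {q : ℂ} (hq : ‖q‖ < 1) :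
    Continuous fun x => ∏' n : ℕ, (1 - g x * q ^ (n + 1)) := by
  refine continuous_iff_continuousAt.2 fun x => ?_
  set K := {y | ‖g y‖ < ‖g x‖ + 1}
  have hK : IsOpen K := isOpen_lt (continuous_norm.comp hg) continuous_const
  have hbound : ∀ n : ℕ, ∀ y ∈ K, ‖-(g y * q ^ (n + 1))‖ ≤ (‖g x‖ + 1) * ‖q‖ ^ (n + 1) :=
    fun n y hy => by
      rw [norm_neg, norm_mul, norm_pow]
      gcongr
      exact le_of_lt hy
  have hprod := Summable.hasProdLocallyUniformlyOn_nat_one_add hK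
    (summable_mul_pow_succ (‖g x‖ + 1) (q := ‖q‖) (by simpa using hq))
    (Eventually.of_forall hbound) (fun n => by fun_prop)
  simp only [← sub_eq_add_neg] at hprod
  exact (hprod.tendstoLocallyUniformlyOn_finsetRange.continuousOn
    (Frequently.of_forall fun n => by fun_prop)).continuousAt (hK.mem_nhds (by simp [K]))

theorem continuous_tprod_jacobi_factors {q : ℂ} (hq : ‖q‖ < 1) :
    Continuous fun v : ℂ => ∏' n : ℕ, ((1 - q ^ (n + 1)) *
      (1 - cexp (2 * (Real.pi : ℂ) * I * v) * q ^ (n + 1)) *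
      (1 - cexp (-(2 * (Real.pi : ℂ) * I * v)) * q ^ (n + 1))) := by
  have hcont {g : ℂ → ℂ} (hg : Continuous g) := continuous_tprod_one_sub_mul_pow_succ hg hq
  have hmul (c : ℂ) := multipliable_one_sub_mul_pow_succ c hq
  simpa only [one_mul] using
    (((hcont continuous_const (g := fun _ => 1)).tprod_mul (fun _ => hmul 1) (fun _ => hmul _)
      (hcont (by fun_prop))).tprod_mul (fun _ => (hmul 1).mul (hmul _)) (fun _ => hmul _)
      (hcont (by fun_prop)))

theorem qnome_norm_lt_one {τ : ℂ} (hτ : 0 < τ.im) : ‖qnome τ‖ < 1 := by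
  rw [qnome, Complex.norm_exp, Real.exp_lt_one_iff]
  simp only [mul_re, re_ofNat, ofReal_re, im_ofNat, ofReal_im, mul_zero, sub_zero, I_re, mul_im,
    zero_mul, add_zero, I_im, mul_one, sub_self, zero_sub, Left.neg_neg_iff]
  nlinarith [Real.pi_pos]

/-- `θ'(0,τ) = 2π q^{1/8} ∏_{j≥1} (1-q^j)³`. -/
theorem theta_deriv_zero (τ : ℂ) (hτ : 0 < τ.im) :
    deriv (fun v => jacobiTheta0 v τ) 0 =
      2 * (Real.pi : ℂ) * Complex.exp ((Real.pi : ℂ) * Complex.I * τ / 4) *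
        ∏' j : ℕ, (1 - qnome τ ^ (j + 1)) ^ 3 := by
  set c := cexp ((Real.pi : ℂ) * I * τ / 4)
  have hsin : HasDerivAt (fun v => 2 * c * sin (Real.pi * v)) (2 * c * Real.pi) 0 := by
    simpa using ((hasDerivAt_id (0 : ℂ)).const_mul (Real.pi : ℂ)).csin.const_mul (2 * c)
  have hθ := hsin.mul_continuousAt_of_eq_zero (by simp)
    (continuous_tprod_jacobi_factors (qnome_norm_lt_one hτ)).continuousAt
  refine hθ.deriv.trans ?_
  simp only [mul_zero, neg_zero, Complex.exp_zero, one_mul, ← pow_three']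
  ring
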